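/- If x is (s,M)-sparse in levels and A satisfies the weighted rNSP in levels with constants ρ ∈ (0,1) and γ > 0, then for every z in the kernel of A, ‖x‖_{ℓ¹_w} ≤ ‖x + z‖_{ℓ¹_w} · (1+ρ)/(1-ρ); in particular, in the noiseless case every (s,M)-sparse vector is within the stated factor of being the unique ℓ¹_w-minimizer subject to the measurement constraint. -/

import Mathlib

open Finset

noncomputable def l1w {N r : ℕ} (w : Fin r → ℝ) (lvl : Fin N → Fin r)
    (x : Fin N → ℂ) : ℝ :=
  ∑ i, w (lvl i) * ‖x i‖

noncomputable def l2norm {N : ℕ} (x : Fin N → ℂ) : ℝ :=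
  Real.sqrt (∑ i, ‖x i‖ ^ 2)

def IsSupportInLevels {N r : ℕ} (lvl : Fin N → Fin r) (s : Fin r → ℕ)
    (Δ : Finset (Fin N)) : Prop :=
  ∀ k : Fin r, (Δ.filter (fun i => lvl i = k)).card ≤ s k

def IsSparseInLevels {N r : ℕ} (lvl : Fin N → Fin r) (s : Fin r → ℕ)
    (z : Fin N → ℂ) : Prop :=
  ∃ Δ : Finset (Fin N), IsSupportInLevels lvl s Δ ∧ ∀ i ∉ Δ, z i = 0

def WeightedRNSPL {N r m : ℕ} (w : Fin r → ℝ) (lvl : Fin N → Fin r)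
    (s : Fin r → ℕ) (A : (Fin N → ℂ) →ₗ[ℂ] (Fin m → ℂ)) (ρ γ ξ : ℝ) : Prop :=
  ∀ Δ : Finset (Fin N), IsSupportInLevels lvl s Δ →
    ∀ x : Fin N → ℂ,
      l2norm (fun i => if i ∈ Δ then x i else 0) ≤
        ρ * l1w w lvl (fun i => if i ∈ Δ then 0 else x i) / Real.sqrt ξ +
          γ * l2norm (A x)

/-!
On the kernel of `A` the robust null space property loses its noise term, and combined with the
Cauchy–Schwarz bound `‖v_Δ‖_{ℓ¹_w} ≤ √ξ ‖v_Δ‖₂` it becomes the weighted null space property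
`‖z_Δ‖_{ℓ¹_w} ≤ ρ ‖z_{Δᶜ}‖_{ℓ¹_w}`. For `x` supported on `Δ` and `ρ ≤ 1`, the triangle inequality
on `Δ` then gives `‖x‖_{ℓ¹_w} ≤ ‖x + z‖_{ℓ¹_w}`, already sharper than the claimed bound since
`(1 + ρ) / (1 - ρ) ≥ 1`.
-/

section WeightedNorms

variable {N r : ℕ} {w : Fin r → ℝ} {lvl : Fin N → Fin r}

lemma l1w_nonneg (hw : ∀ k, 0 ≤ w k) (x : Fin N → ℂ) : 0 ≤ l1w w lvl x :=
  sum_nonneg fun _ _ => mul_nonneg (hw _) (norm_nonneg _)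

lemma l1w_ite_mem_zero (Δ : Finset (Fin N)) (x : Fin N → ℂ) :
    l1w w lvl (fun i => if i ∈ Δ then 0 else x i) = ∑ i ∈ Δᶜ, w (lvl i) * ‖x i‖ := by
  rw [l1w, ← sum_add_sum_compl Δ, sum_eq_zero fun i hi => by simp [hi], zero_add]
  exact sum_congr rfl fun i hi => by rw [if_neg (mem_compl.1 hi)]

lemma l2norm_ite_mem (Δ : Finset (Fin N)) (x : Fin N → ℂ) :
    l2norm (fun i => if i ∈ Δ then x i else 0) = Real.sqrt (∑ i ∈ Δ, ‖x i‖ ^ 2) := by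
  simp [l2norm, apply_ite, sum_ite_mem]

lemma l2norm_zero : l2norm (0 : Fin N → ℂ) = 0 := by
  simp [l2norm]

lemma IsSupportInLevels.sum_sq_weight_le {s : Fin r → ℕ} {Δ : Finset (Fin N)}
    (hΔ : IsSupportInLevels lvl s Δ) :
    ∑ i ∈ Δ, w (lvl i) ^ 2 ≤ ∑ k, w k ^ 2 * (s k : ℝ) := by
  rw [← sum_fiberwise Δ lvl]
  refine sum_le_sum fun k _ => ?_
  calc ∑ i ∈ Δ with lvl i = k, w (lvl i) ^ 2
      = #{i ∈ Δ | lvl i = k} * w k ^ 2 := by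
        rw [sum_congr rfl fun i hi => by rw [(mem_filter.1 hi).2], sum_const, nsmul_eq_mul]
    _ ≤ w k ^ 2 * (s k : ℝ) := by
        rw [mul_comm]
        exact mul_le_mul_of_nonneg_left (by exact_mod_cast hΔ k) (sq_nonneg _)

lemma IsSupportInLevels.sum_weighted_norm_le {s : Fin r → ℕ} {Δ : Finset (Fin N)}
    (hΔ : IsSupportInLevels lvl s Δ) (x : Fin N → ℂ) :
    ∑ i ∈ Δ, w (lvl i) * ‖x i‖ ≤
      Real.sqrt (∑ k, w k ^ 2 * (s k : ℝ)) * l2norm (fun i => if i ∈ Δ then x i else 0) := by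
  rw [l2norm_ite_mem]
  exact (Real.sum_mul_le_sqrt_mul_sqrt Δ _ _).trans <| mul_le_mul_of_nonneg_right
    (Real.sqrt_le_sqrt hΔ.sum_sq_weight_le) (Real.sqrt_nonneg _)

lemma WeightedRNSPL.sum_weighted_norm_le_of_map_eq_zero {m : ℕ} {s : Fin r → ℕ}
    {A : (Fin N → ℂ) →ₗ[ℂ] (Fin m → ℂ)} {ρ γ : ℝ} (hw : ∀ k, 0 ≤ w k) (hρ : 0 ≤ ρ)
    (hrnsp : WeightedRNSPL w lvl s A ρ γ (∑ k, w k ^ 2 * (s k : ℝ)))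
    {Δ : Finset (Fin N)} (hΔ : IsSupportInLevels lvl s Δ) {z : Fin N → ℂ} (hz : A z = 0) :
    ∑ i ∈ Δ, w (lvl i) * ‖z i‖ ≤ ρ * ∑ i ∈ Δᶜ, w (lvl i) * ‖z i‖ := by
  set t := Real.sqrt (∑ k, w k ^ 2 * (s k : ℝ))
  set b := ∑ i ∈ Δᶜ, w (lvl i) * ‖z i‖
  have hnsp : l2norm (fun i => if i ∈ Δ then z i else 0) ≤ ρ * b / t := by
    simpa [hz, l1w_ite_mem_zero, l2norm_zero] using hrnsp Δ hΔ z
  have hb : 0 ≤ ρ * b := mul_nonneg hρ ((l1w_nonneg hw _).trans_eq (l1w_ite_mem_zero Δ z))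
  calc ∑ i ∈ Δ, w (lvl i) * ‖z i‖ ≤ t * l2norm (fun i => if i ∈ Δ then z i else 0) :=
        hΔ.sum_weighted_norm_le z
    _ ≤ t * (ρ * b / t) := mul_le_mul_of_nonneg_left hnsp (Real.sqrt_nonneg _)
    _ ≤ ρ * b := by
        rcases eq_or_ne t 0 with ht | ht
        · simpa [ht] using hb
        · rw [mul_div_cancel₀ _ ht]

lemma l1w_le_l1w_add_of_sum_le {x z : Fin N → ℂ} {Δ : Finset (Fin N)} (hw : ∀ k, 0 ≤ w k)
    (hx : ∀ i ∉ Δ, x i = 0)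
    (hz : ∑ i ∈ Δ, w (lvl i) * ‖z i‖ ≤ ∑ i ∈ Δᶜ, w (lvl i) * ‖z i‖) :
    l1w w lvl x ≤ l1w w lvl (fun i => x i + z i) := by
  have hx_off : ∑ i ∈ Δᶜ, w (lvl i) * ‖x i‖ = 0 :=
    sum_eq_zero fun i hi => by simp [hx i (mem_compl.1 hi)]
  have hxz_off : ∑ i ∈ Δᶜ, w (lvl i) * ‖x i + z i‖ = ∑ i ∈ Δᶜ, w (lvl i) * ‖z i‖ :=
    sum_congr rfl fun i hi => by rw [hx i (mem_compl.1 hi), zero_add]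
  have hx_on : ∑ i ∈ Δ, w (lvl i) * ‖x i‖ ≤
      ∑ i ∈ Δ, w (lvl i) * ‖x i + z i‖ + ∑ i ∈ Δ, w (lvl i) * ‖z i‖ := by
    rw [← sum_add_distrib]
    refine sum_le_sum fun i _ => ?_
    rw [← mul_add]
    exact mul_le_mul_of_nonneg_left (by simpa using norm_sub_le (x i + z i) (z i)) (hw _)
  rw [l1w, l1w, ← sum_add_sum_compl Δ, ← sum_add_sum_compl Δ (fun i => _ * ‖x i + z i‖),
    hx_off, hxz_off]
  linarith

end WeightedNorms

theorem stmt_8_general {N r m : ℕ} (w : Fin r → ℝ) (hw : ∀ k, 0 < w k)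
    (lvl : Fin N → Fin r) (s : Fin r → ℕ)
    (A : (Fin N → ℂ) →ₗ[ℂ] (Fin m → ℂ)) (ρ γ : ℝ)
    (hρ : 0 < ρ) (hρ1 : ρ < 1)
    (ξ : ℝ) (hξ : ξ = ∑ k, (w k) ^ 2 * (s k : ℝ))
    (hrnsp : WeightedRNSPL w lvl s A ρ γ ξ)
    (x : Fin N → ℂ) (hx : IsSparseInLevels lvl s x) :
    ∀ z : Fin N → ℂ, A z = 0 →
      l1w w lvl x ≤ l1w w lvl (fun i => x i + z i) * ((1 + ρ) / (1 - ρ)) := by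
  intro z hz
  obtain ⟨Δ, hΔ, hx_supp⟩ := hx
  have hw' : ∀ k, 0 ≤ w k := fun k => (hw k).le
  subst hξ
  have hnsp := hrnsp.sum_weighted_norm_le_of_map_eq_zero hw' hρ.le hΔ hz
  have hz_off : 0 ≤ ∑ i ∈ Δᶜ, w (lvl i) * ‖z i‖ :=
    (l1w_nonneg hw' _).trans_eq (l1w_ite_mem_zero Δ z)
  have hle := l1w_le_l1w_add_of_sum_le hw' hx_supp
    (hnsp.trans (mul_le_of_le_one_left hz_off hρ1.le))
  have hfactor : 1 ≤ (1 + ρ) / (1 - ρ) := by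
    rw [one_le_div₀ (by linarith)]
    linarith
  exact hle.trans (le_mul_of_one_le_right (l1w_nonneg hw' _) hfactor)

theorem stmt_8 {N r m : ℕ} (w : Fin r → ℝ) (hw : ∀ k, 0 < w k)
    (lvl : Fin N → Fin r) (s : Fin r → ℕ)
    (A : (Fin N → ℂ) →ₗ[ℂ] (Fin m → ℂ)) (ρ γ : ℝ)
    (hρ : 0 < ρ) (hρ1 : ρ < 1) (hγ : 0 < γ)
    (ξ : ℝ) (hξ : ξ = ∑ k, (w k) ^ 2 * (s k : ℝ))
    (hrnsp : WeightedRNSPL w lvl s A ρ γ ξ)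
    (x : Fin N → ℂ) (hx : IsSparseInLevels lvl s x) :
    ∀ z : Fin N → ℂ, A z = 0 →
      l1w w lvl x ≤ l1w w lvl (fun i => x i + z i) * ((1 + ρ) / (1 - ρ)) :=
  stmt_8_general w hw lvl s A ρ γ hρ hρ1 ξ hξ hrnsp x hx
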